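/- arXiv:1509.08097 — 2 statements merged into one kernel-verified Lean document; each statement's English description precedes it below -/
import Mathlib

section
/- Let 1 < p < ∞ and let (X_n)_{n≥1} be a sequence of real Banach spaces. For each m ∈ ℕ put Y_m := [⊕_{n=1}^m (X_1 ⊕₁ ⋯ ⊕₁ X_n)]_p (a finite ℓ^p-sum of ℓ¹-direct sums). Assume that for all ε > 0 and R > 0 there exists η > 0 such that for every m ∈ ℕ, every y ∈ Y_m with ‖y‖ ≥ ε, and every sequence (y_k) in Y_m converging weakly to 0 with limsup_{k→∞} ‖y_k‖ ≤ R, one has η + liminf_{k→∞} ‖y_k‖ ≤ liminf_{k→∞} ‖y_k − y‖ (i.e., inf_m η_{Y_m}(ε,R) > 0 for all ε, R > 0). Then the p-Cesàro sum [⊕_{n∈ℕ} X_n]_{ces_p} has the uniform Opial property: for all ε > 0 and R > 0 there exists η > 0 such that for every x in the Cesàro sum with ‖x‖_{ces_p} ≥ ε and every sequence (x^{(k)}) in the Cesàro sum converging weakly to 0 with limsup_{k→∞} ‖x^{(k)}‖_{ces_p} ≤ R, one has η + liminf_{k→∞} ‖x^{(k)}‖_{ces_p} ≤ liminf_{k→∞}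 ‖x^{(k)} − x‖_{ces_p}. -/
/-!
Saejung's map `S` embeds the Cesàro sum isometrically into `ℓ^p(Eₙ)`, `Eₙ = X₁ ⊕₁ ⋯ ⊕₁ Xₙ`,
so it suffices that `ℓ^p(Gₙ)` inherits the uniform Opial property from its truncations
`Y_m = (G₁ ⊕ ⋯ ⊕ G_m)_p` when their moduli are bounded below uniformly in `m`.

Given `w` with `‖w‖ ≥ ε` and a weakly null `(y_k)`, cut at a level `m` beyond which `w` has norm
at most `δ`, and write `P` for the restriction to the first `m` coordinates and `B_k` for the
norm of the tail of `y_k`. Then `‖y_k‖^p = ‖P y_k‖^p + B_k^p`, while `y_k - w` has, up to `δ`,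
the head `P y_k - P w` and the same tail `B_k`. Along a subsequence on which all these
quantities converge, `(P y_k)` is weakly null in `Y_m` and the Opial inequality there gives
`lim ‖P y_k - P w‖ ≥ η + lim ‖P y_k‖`. Since `t ↦ (t^p + η^p)^{1/p} - t` is decreasing, this gain
survives adding the common tail and is at least `(R^p + η^p)^{1/p} - R`.
-/

open Filter
open scoped ENNReal Topology

/-- The Cesàro norm `‖x‖_{ces_p} = (∑_{n≥1} ((1/n) ∑_{i=1}^n ‖x_i‖)^p)^{1/p}` of a
vector-valued sequence `x` (indexed by `ℕ` starting from `0`). -/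
noncomputable def cesNorm (p : ℝ) {X : ℕ → Type*} [∀ n, NormedAddCommGroup (X n)]
    (x : ∀ n, X n) : ℝ :=
  (∑' n : ℕ, ((∑ i ∈ Finset.range (n + 1), ‖x i‖) / ((n : ℝ) + 1)) ^ p) ^ (1 / p)

/-- Membership in the `p`-Cesàro sum `[⊕ₙ Xₙ]_{ces_p}`. -/
def MemCes (p : ℝ) {X : ℕ → Type*} [∀ n, NormedAddCommGroup (X n)] (x : ∀ n, X n) : Prop :=
  Summable fun n : ℕ => ((∑ i ∈ Finset.range (n + 1), ‖x i‖) / ((n : ℝ) + 1)) ^ p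

/-- `X₁ ⊕₁ ⋯ ⊕₁ Xₙ`, the finite direct sum with the `ℓ¹`-norm. -/
abbrev cesTarget (X : ℕ → Type*) (n : ℕ) : Type _ := PiLp 1 (fun i : Fin (n + 1) => X i)

/-- Saejung's embedding `S`, `(Sx)(n) = (1/n)(x₁, …, xₙ)`, from the Cesàro sum into the
`ℓ^p`-sum of the spaces `X₁ ⊕₁ ⋯ ⊕₁ Xₙ`. -/
noncomputable def cesEmbed {X : ℕ → Type*} [∀ n, NormedAddCommGroup (X n)]
    [∀ n, NormedSpace ℝ (X n)] (x : ∀ n, X n) : ∀ n, cesTarget X n :=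
  fun n => ((n : ℝ) + 1)⁻¹ • (WithLp.equiv 1 (∀ i : Fin (n + 1), X i)).symm (fun i => x i)

/-- `Y_m = [⊕_{n=1}^m (X₁ ⊕₁ ⋯ ⊕₁ Xₙ)]_p`, a finite `ℓ^p`-sum of `ℓ¹`-direct sums. -/
abbrev cesFinTarget (q : ℝ≥0∞) (X : ℕ → Type*) (m : ℕ) : Type _ :=
  PiLp q (fun n : Fin m => cesTarget X n)

theorem antitoneOn_rpow_add_rpow_rpow_sub {p η : ℝ} (hp : 1 ≤ p) (hη : 0 ≤ η) :
    AntitoneOn (fun t : ℝ => (t ^ p + η ^ p) ^ (1 / p) - t) (Set.Ici 0) := by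
  intro s hs t ht hst
  have hp0 : p ≠ 0 := by positivity
  have hst' : 0 ≤ t - s := sub_nonneg.mpr hst
  -- Minkowski for the vectors `(s, η)` and `(t - s, 0)`
  have := Real.Lp_add_le_of_nonneg (s := Finset.univ) (f := ![s, η]) (g := ![t - s, 0]) hp
    (fun i _ => by fin_cases i <;> simp [Set.mem_Ici.mp hs, hη])
    (fun i _ => by fin_cases i <;> simp [hst'])
  simp only [Fin.sum_univ_two, Matrix.cons_val_zero, Matrix.cons_val_one, add_zero,
    add_sub_cancel, Real.zero_rpow hp0] at this
  rw [one_div, Real.rpow_rpow_inv hst' hp0] at this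
  simp only [one_div]
  linarith

theorem lt_rpow_add_rpow_rpow {p R η : ℝ} (hp : 0 < p) (hR : 0 ≤ R) (hη : 0 < η) :
    R < (R ^ p + η ^ p) ^ (1 / p) := by
  calc R = (R ^ p) ^ (1 / p) := by rw [one_div, Real.rpow_rpow_inv hR hp.ne']
    _ < (R ^ p + η ^ p) ^ (1 / p) := by
      gcongr
      exact lt_add_of_pos_right _ (Real.rpow_pos_of_pos hη p)

theorem exists_strictMono_tendsto_liminf_and_tendsto {F : Type*} [PseudoMetricSpace F]
    [ProperSpace F] {a : ℕ → ℝ} (ha : IsBoundedUnder (· ≤ ·) atTop a)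
    (ha' : IsBoundedUnder (· ≥ ·) atTop a) {v : ℕ → F} {s : Set F}
    (hs : Bornology.IsBounded s) (hv : ∀ k, v k ∈ s) :
    ∃ φ : ℕ → ℕ, StrictMono φ ∧ Tendsto (a ∘ φ) atTop (𝓝 (liminf a atTop)) ∧
      ∃ L, Tendsto (v ∘ φ) atTop (𝓝 L) := by
  obtain ⟨ψ, hψ, haψ⟩ := (MapClusterPt.liminf ha.isCoboundedUnder_ge ha').tendsto_subseq
  obtain ⟨L, -, χ, hχ, hvχ⟩ := tendsto_subseq_of_bounded hs fun k => hv (ψ k)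
  exact ⟨ψ ∘ χ, hψ.comp hχ, haψ.comp hχ.tendsto_atTop, L, hvχ⟩

theorem bddAbove_range_norm_of_bddAbove_dual {𝕜 E ι : Type*} [RCLike 𝕜]
    [NormedAddCommGroup E] [NormedSpace 𝕜 E] {u : ι → E}
    (h : ∀ φ : StrongDual 𝕜 E, BddAbove (Set.range fun k => ‖φ (u k)‖)) :
    BddAbove (Set.range fun k => ‖u k‖) := by
  let J := NormedSpace.inclusionInDoubleDualLi 𝕜 (E := E)
  obtain ⟨C, hC⟩ := banach_steinhaus (g := fun k => J (u k)) fun φ => by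
    obtain ⟨C, hC⟩ := h φ
    exact ⟨C, fun k => hC ⟨k, rfl⟩⟩
  exact ⟨C, by rintro _ ⟨k, rfl⟩; simpa only [J, LinearIsometry.norm_map] using hC k⟩

theorem rpow_add_rpow_add_gap_le {p R α β γ η : ℝ} (hp : 1 ≤ p) (hα : 0 ≤ α) (hβ : 0 ≤ β)
    (hη : 0 ≤ η) (hR : (α ^ p + β ^ p) ^ (1 / p) ≤ R) (hαγ : η + α ≤ γ) :
    (α ^ p + β ^ p) ^ (1 / p) + ((R ^ p + η ^ p) ^ (1 / p) - R) ≤ (γ ^ p + β ^ p) ^ (1 / p) := by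
  have hp0 : 0 < p := by positivity
  have hDp : ((α ^ p + β ^ p) ^ (1 / p)) ^ p = α ^ p + β ^ p := by
    rw [one_div, Real.rpow_inv_rpow (by positivity) hp0.ne']
  set D := (α ^ p + β ^ p) ^ (1 / p)
  have hD : 0 ≤ D := by positivity
  calc D + ((R ^ p + η ^ p) ^ (1 / p) - R) ≤ D + ((D ^ p + η ^ p) ^ (1 / p) - D) := by
        gcongr 1
        exact antitoneOn_rpow_add_rpow_rpow_sub hp hη hD (hD.trans hR) hR
    _ = ((α ^ p + η ^ p) + β ^ p) ^ (1 / p) := by rw [hDp]; ring_nf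
    _ ≤ ((η + α) ^ p + β ^ p) ^ (1 / p) := by
        gcongr
        rw [add_comm (α ^ p)]
        exact Real.add_rpow_le_rpow_add hη hα hp
    _ ≤ (γ ^ p + β ^ p) ^ (1 / p) := by gcongr

theorem liminf_add_rpow_gap_le_liminf {p R η δ M : ℝ} (hp : 1 ≤ p) (hη : 0 ≤ η)
    {A B C a d : ℕ → ℝ} (hA : ∀ k, A k ∈ Set.Icc 0 M) (hB : ∀ k, B k ∈ Set.Icc 0 M)
    (hC : ∀ k, C k ∈ Set.Icc 0 M) (ha : ∀ k, a k ∈ Set.Icc 0 M)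
    (hd : ∀ k, d k = (A k ^ p + B k ^ p) ^ (1 / p)) (hdR : limsup d atTop ≤ R)
    (hCa : ∀ k, (C k ^ p + B k ^ p) ^ (1 / p) ≤ a k + δ)
    (hAC : ∀ φ : ℕ → ℕ, StrictMono φ → ∀ α γ, Tendsto (A ∘ φ) atTop (𝓝 α) →
      Tendsto (C ∘ φ) atTop (𝓝 γ) → α ≤ R → η + α ≤ γ) :
    liminf d atTop + ((R ^ p + η ^ p) ^ (1 / p) - R) - δ ≤ liminf a atTop := by
  have hp0 : 0 < p := by positivity
  have hd0 : ∀ k, 0 ≤ d k := fun k => by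
    have := (hA k).1; have := (hB k).1
    rw [hd]; positivity
  have hdM : ∀ k, d k ≤ M + M := fun k => by
    rw [hd]
    exact (Real.rpow_add_rpow_le_add (hA k).1 (hB k).1 hp).trans (add_le_add (hA k).2 (hB k).2)
  obtain ⟨φ, hφ, haφ, ⟨α, β, γ⟩, hv⟩ := exists_strictMono_tendsto_liminf_and_tendsto
    (isBoundedUnder_of ⟨M, fun k => (ha k).2⟩) (isBoundedUnder_of ⟨0, fun k => (ha k).1⟩)
    (Metric.isBounded_Icc (0 : ℝ × ℝ × ℝ) (M, M, M)) (v := fun k => (A k, B k, C k))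
    fun k => ⟨⟨(hA k).1, (hB k).1, (hC k).1⟩, ⟨(hA k).2, (hB k).2, (hC k).2⟩⟩
  have hAφ : Tendsto (A ∘ φ) atTop (𝓝 α) := (continuous_fst.tendsto _).comp hv
  have hBφ : Tendsto (B ∘ φ) atTop (𝓝 β) := (continuous_snd.fst.tendsto _).comp hv
  have hCφ : Tendsto (C ∘ φ) atTop (𝓝 γ) := (continuous_snd.snd.tendsto _).comp hv
  have hα : 0 ≤ α := ge_of_tendsto' hAφ fun j => (hA _).1
  have hβ : 0 ≤ β := ge_of_tendsto' hBφ fun j => (hB _).1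
  have hdφ : Tendsto (d ∘ φ) atTop (𝓝 ((α ^ p + β ^ p) ^ (1 / p))) := by
    simp only [Function.comp_def, hd]
    exact ((hAφ.rpow_const (.inr hp0.le)).add (hBφ.rpow_const (.inr hp0.le))).rpow_const
      (.inr (by positivity))
  have hD := hdφ.mapClusterPt.of_comp hφ.tendsto_atTop
  have hDR := (hD.le_limsup (isBoundedUnder_of ⟨M + M, hdM⟩)).trans hdR
  have hαD : α ≤ (α ^ p + β ^ p) ^ (1 / p) := by
    calc α = (α ^ p) ^ (1 / p) := by rw [one_div, Real.rpow_rpow_inv hα hp0.ne']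
      _ ≤ (α ^ p + β ^ p) ^ (1 / p) := by gcongr; exact le_add_of_nonneg_right (by positivity)
  have hγa : (γ ^ p + β ^ p) ^ (1 / p) ≤ liminf a atTop + δ := by
    refine le_of_tendsto_of_tendsto' ?_ (haφ.add_const δ) fun j => hCa (φ j)
    exact ((hCφ.rpow_const (.inr hp0.le)).add (hBφ.rpow_const (.inr hp0.le))).rpow_const
      (.inr (by positivity))
  have := hD.liminf_le (isBoundedUnder_of ⟨0, hd0⟩)
  have := rpow_add_rpow_add_gap_le hp hα hβ hη hDR (hAC φ hφ α γ hAφ hCφ (hαD.trans hDR))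
  linarith

namespace lp

variable {p : ℝ≥0∞} {G : ℕ → Type*} [∀ n, NormedAddCommGroup (G n)]

noncomputable def tailNorm (m : ℕ) (f : lp G p) : ℝ :=
  (∑' n, ‖f (n + m)‖ ^ p.toReal) ^ (1 / p.toReal)

theorem tailNorm_nonneg (m : ℕ) (f : lp G p) : 0 ≤ tailNorm m f :=
  Real.rpow_nonneg (tsum_nonneg fun _ => by positivity) _

variable [Fact (1 ≤ p)]

theorem tendsto_tailNorm (hp : p ≠ ∞) (f : lp G p) :
    Tendsto (fun m => tailNorm m f) atTop (𝓝 0) := by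
  have hp0 : 0 < p.toReal := zero_lt_one.trans_le ((ENNReal.dichotomy p).resolve_left hp)
  have := (tendsto_sum_nat_add fun n => ‖f n‖ ^ p.toReal).rpow_const
    (p := 1 / p.toReal) (.inr (by positivity))
  rwa [Real.zero_rpow (by positivity)] at this

variable [∀ n, NormedSpace ℝ (G n)]

noncomputable def truncate (m : ℕ) : lp G p →L[ℝ] PiLp p (fun n : Fin m => G n) :=
  (PiLp.continuousLinearEquiv p ℝ _).symm.toContinuousLinearMap.comp
    (ContinuousLinearMap.pi fun n : Fin m => evalCLM ℝ G p n)

@[simp]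
theorem truncate_apply (m : ℕ) (f : lp G p) (n : Fin m) : truncate m f n = f n := rfl

theorem norm_rpow_eq_norm_truncate_rpow_add_tailNorm_rpow (hp : p ≠ ∞) (m : ℕ) (f : lp G p) :
    ‖f‖ ^ p.toReal = ‖truncate m f‖ ^ p.toReal + tailNorm m f ^ p.toReal := by
  have hp0 : 0 < p.toReal := zero_lt_one.trans_le ((ENNReal.dichotomy p).resolve_left hp)
  rw [lp.norm_rpow_eq_tsum hp0, tailNorm, one_div, Real.rpow_inv_rpow
    (tsum_nonneg fun _ => by positivity) hp0.ne', PiLp.norm_eq_sum hp0, one_div,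
    Real.rpow_inv_rpow (Finset.sum_nonneg fun _ _ => by positivity) hp0.ne',
    ← ((lp.memℓp f).summable hp0).sum_add_tsum_nat_add m]
  simp [← Fin.sum_univ_eq_sum_range (fun n => ‖f n‖ ^ p.toReal) m]

theorem norm_eq_rpow_add_rpow (hp : p ≠ ∞) (m : ℕ) (f : lp G p) :
    ‖f‖ = (‖truncate m f‖ ^ p.toReal + tailNorm m f ^ p.toReal) ^ (1 / p.toReal) := by
  have hp0 : 0 < p.toReal := zero_lt_one.trans_le ((ENNReal.dichotomy p).resolve_left hp)
  rw [← norm_rpow_eq_norm_truncate_rpow_add_tailNorm_rpow hp, one_div,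
    Real.rpow_rpow_inv (norm_nonneg _) hp0.ne']

theorem norm_le_norm_truncate_add_tailNorm (hp : p ≠ ∞) (m : ℕ) (f : lp G p) :
    ‖f‖ ≤ ‖truncate m f‖ + tailNorm m f := by
  rw [norm_eq_rpow_add_rpow hp m]
  exact Real.rpow_add_rpow_le_add (norm_nonneg _) (tailNorm_nonneg m f)
    ((ENNReal.dichotomy p).resolve_left hp)

theorem norm_truncate_le (hp : p ≠ ∞) (m : ℕ) (f : lp G p) : ‖truncate m f‖ ≤ ‖f‖ := by
  have hp0 : 0 < p.toReal := zero_lt_one.trans_le ((ENNReal.dichotomy p).resolve_left hp)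
  rw [← Real.rpow_le_rpow_iff (norm_nonneg _) (norm_nonneg _) hp0,
    norm_rpow_eq_norm_truncate_rpow_add_tailNorm_rpow hp m]
  exact le_add_of_nonneg_right (Real.rpow_nonneg (tailNorm_nonneg m f) _)

theorem tailNorm_le_norm (hp : p ≠ ∞) (m : ℕ) (f : lp G p) : tailNorm m f ≤ ‖f‖ := by
  have hp0 : 0 < p.toReal := zero_lt_one.trans_le ((ENNReal.dichotomy p).resolve_left hp)
  rw [← Real.rpow_le_rpow_iff (tailNorm_nonneg m f) (norm_nonneg _) hp0,
    norm_rpow_eq_norm_truncate_rpow_add_tailNorm_rpow hp m]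
  exact le_add_of_nonneg_left (by positivity)

theorem rpow_add_rpow_le_norm_sub_add_tailNorm (hp : p ≠ ∞) (m : ℕ) (f g : lp G p) :
    (‖truncate m f - truncate m g‖ ^ p.toReal + tailNorm m f ^ p.toReal) ^ (1 / p.toReal)
      ≤ ‖f - g‖ + tailNorm m g := by
  -- compare with the truncation `g'` of `g`, which has the same head as `g` and no tail
  obtain ⟨g', hg'⟩ : ∃ g' : lp G p, ∀ n, g' n = if n < m then g n else 0 := by
    refine ⟨⟨fun n => if n < m then g n else 0, memℓp_gen ?_⟩, fun n => rfl⟩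
    refine summable_of_ne_finset_zero (s := Finset.range m) fun n hn => ?_
    have hp0 : 0 < p.toReal := zero_lt_one.trans_le ((ENNReal.dichotomy p).resolve_left hp)
    simp [if_neg (by simpa using hn : ¬n < m), hp0.ne']
  have hhead : truncate m g' = truncate m g := by
    ext n
    simp [hg']
  have htail : ∀ h : lp G p, ∀ n, (h - g') (n + m) = h (n + m) := by
    intro h n
    simp [hg']
  have h1 : tailNorm m (f - g') = tailNorm m f := by simp only [tailNorm, htail]
  have h2 : tailNorm m (g - g') = tailNorm m g := by simp only [tailNorm, htail]
  calc _ = ‖f - g'‖ := by rw [norm_eq_rpow_add_rpow hp m, map_sub, hhead, h1]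
    _ ≤ ‖f - g‖ + ‖g - g'‖ := norm_sub_le_norm_sub_add_norm_sub _ _ _
    _ = ‖f - g‖ + tailNorm m g := by
      have hp0 : 0 < p.toReal := zero_lt_one.trans_le ((ENNReal.dichotomy p).resolve_left hp)
      rw [norm_eq_rpow_add_rpow hp m (g - g'), map_sub, hhead, sub_self, h2]
      simp [hp0.ne', Real.rpow_rpow_inv (tailNorm_nonneg m g) hp0.ne']

end lp

/-- `η ≤ η_E(ε, R)` for the modulus `η_E` of the uniform Opial property. -/
def LeOpialModulus (E : Type*) [NormedAddCommGroup E] [NormedSpace ℝ E] (ε R η : ℝ) : Prop :=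
  ∀ y : E, ε ≤ ‖y‖ → ∀ u : ℕ → E, (∀ φ : E →L[ℝ] ℝ, Tendsto (fun k => φ (u k)) atTop (𝓝 0)) →
    limsup (fun k => ‖u k‖) atTop ≤ R →
    η + liminf (fun k => ‖u k‖) atTop ≤ liminf (fun k => ‖u k - y‖) atTop

theorem lp.leOpialModulus_of_forall_piLp {p : ℝ≥0∞} [Fact (1 ≤ p)] (hp : p ≠ ∞)
    {G : ℕ → Type*} [∀ n, NormedAddCommGroup (G n)] [∀ n, NormedSpace ℝ (G n)]
    {ε R η : ℝ} (hε : 0 < ε) (hR : 0 ≤ R) (hη : 0 < η)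
    (h : ∀ m, LeOpialModulus (PiLp p fun n : Fin m => G n) (ε / 2) R η) :
    LeOpialModulus (lp G p) ε R (((R ^ p.toReal + η ^ p.toReal) ^ (1 / p.toReal) - R) / 2) := by
  intro w hw y hy hyR
  set c := (R ^ p.toReal + η ^ p.toReal) ^ (1 / p.toReal) - R
  have hp1 : 1 ≤ p.toReal := (ENNReal.dichotomy p).resolve_left hp
  have hc : 0 < c := sub_pos.mpr (lt_rpow_add_rpow_rpow (by positivity) hR hη)
  obtain ⟨m, hm⟩ := ((tendsto_tailNorm hp w).eventually
    (ge_mem_nhds (lt_min (half_pos hc) (half_pos hε)))).exists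
  have hm₁ := hm.trans (min_le_left _ _)
  have hm₂ := hm.trans (min_le_right _ _)
  set P : lp G p →L[ℝ] PiLp p (fun n : Fin m => G n) := truncate m
  have hPw : ε / 2 ≤ ‖P w‖ := by
    have := norm_le_norm_truncate_add_tailNorm hp m w
    linarith
  obtain ⟨M, hM⟩ := bddAbove_range_norm_of_bddAbove_dual fun φ => (hy φ).norm.bddAbove_range
  have hyM : ∀ k, ‖y k‖ ≤ M := fun k => hM ⟨k, rfl⟩
  have hPy : ∀ k, ‖P (y k)‖ ≤ M := fun k => (norm_truncate_le hp m (y k)).trans (hyM k)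
  have hPw' : ‖P w‖ ≤ ‖w‖ := norm_truncate_le hp m w
  have key := liminf_add_rpow_gap_le_liminf (M := M + ‖w‖) (R := R) (δ := c / 2) hp1 hη.le
    (A := fun k => ‖P (y k)‖) (B := fun k => tailNorm m (y k))
    (C := fun k => ‖P (y k) - P w‖) (a := fun k => ‖y k - w‖) (d := fun k => ‖y k‖)
    (fun k => ⟨norm_nonneg _, by linarith [hPy k, norm_nonneg w]⟩)
    (fun k => ⟨tailNorm_nonneg m _,
      by linarith [tailNorm_le_norm hp m (y k), hyM k, norm_nonneg w]⟩)
    (fun k => ⟨norm_nonneg _, by linarith [norm_sub_le (P (y k)) (P w), hPy k]⟩)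
    (fun k => ⟨norm_nonneg _, by linarith [norm_sub_le (y k) w, hyM k]⟩)
    (fun k => norm_eq_rpow_add_rpow hp m (y k)) hyR
    (fun k => (rpow_add_rpow_le_norm_sub_add_tailNorm hp m (y k) w).trans (by linarith))
    (fun φ hφ α γ hα hγ hαR => by
      simp only [Function.comp_def] at hα hγ
      have := h m (P w) hPw (fun j => P (y (φ j)))
        (fun ψ => (hy (ψ.comp P)).comp hφ.tendsto_atTop) (by rw [hα.limsup_eq]; exact hαR)
      rwa [hα.liminf_eq, hγ.liminf_eq] at this)
  linarith

section Cesaro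

variable {p : ℝ} {X : ℕ → Type*} [∀ n, NormedAddCommGroup (X n)] [∀ n, NormedSpace ℝ (X n)]

theorem norm_cesEmbed (x : ∀ n, X n) (n : ℕ) :
    ‖cesEmbed x n‖ = (∑ i ∈ Finset.range (n + 1), ‖x i‖) / ((n : ℝ) + 1) := by
  rw [cesEmbed, norm_smul, norm_inv, Real.norm_of_nonneg (by positivity), inv_mul_eq_div,
    PiLp.norm_eq_sum (by simp)]
  simp [Fin.sum_univ_eq_sum_range (fun i => ‖x i‖) (n + 1)]

theorem cesEmbed_sub (x z : ∀ n, X n) : cesEmbed (x - z) = cesEmbed x - cesEmbed z := by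
  funext n
  simp only [cesEmbed, Pi.sub_apply, ← smul_sub]
  rfl

theorem memℓp_cesEmbed (hp : 0 < p) {x : ∀ n, X n} (hx : MemCes p x) :
    Memℓp (cesEmbed x) (ENNReal.ofReal p) := by
  apply memℓp_gen
  rw [ENNReal.toReal_ofReal hp.le]
  simp only [norm_cesEmbed]
  exact hx

theorem cesNorm_eq_norm (hp : 0 < p) {x : ∀ n, X n} {f : lp (cesTarget X) (ENNReal.ofReal p)}
    (hf : ⇑f = cesEmbed x) : cesNorm p x = ‖f‖ := by
  rw [lp.norm_eq_tsum_rpow (by rwa [ENNReal.toReal_ofReal hp.le]), ENNReal.toReal_ofReal hp.le,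
    cesNorm, hf]
  simp only [norm_cesEmbed]

end Cesaro

theorem stmt3_general (p : ℝ) [Fact (1 ≤ ENNReal.ofReal p)]
    (X : ℕ → Type*) [∀ n, NormedAddCommGroup (X n)] [∀ n, NormedSpace ℝ (X n)]
    (hη : ∀ ε > (0 : ℝ), ∀ R > (0 : ℝ), ∃ η > (0 : ℝ), ∀ m : ℕ,
      ∀ y : cesFinTarget (ENNReal.ofReal p) X m, ε ≤ ‖y‖ →
        ∀ u : ℕ → cesFinTarget (ENNReal.ofReal p) X m,
          (∀ φ : cesFinTarget (ENNReal.ofReal p) X m →L[ℝ] ℝ,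
            Tendsto (fun k => φ (u k)) atTop (𝓝 0)) →
          limsup (fun k => ‖u k‖) atTop ≤ R →
          η + liminf (fun k => ‖u k‖) atTop ≤ liminf (fun k => ‖u k - y‖) atTop) :
    ∀ ε > (0 : ℝ), ∀ R > (0 : ℝ), ∃ η > (0 : ℝ),
      ∀ z : ∀ n, X n, MemCes p z → ε ≤ cesNorm p z →
        ∀ x : ℕ → ∀ n, X n, (∀ k, MemCes p (x k)) →
          ∀ y : ℕ → lp (cesTarget X) (ENNReal.ofReal p),
            (∀ k, (y k : ∀ n, cesTarget X n) = cesEmbed (x k)) →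
            (∀ φ : lp (cesTarget X) (ENNReal.ofReal p) →L[ℝ] ℝ,
              Tendsto (fun k => φ (y k)) atTop (𝓝 0)) →
            limsup (fun k => cesNorm p (x k)) atTop ≤ R →
            η + liminf (fun k => cesNorm p (x k)) atTop ≤
              liminf (fun k => cesNorm p (x k - z)) atTop := by
  intro ε hε R hR
  have hp : 0 < p := ENNReal.ofReal_pos.mp (zero_lt_one.trans_le Fact.out)
  obtain ⟨η, hη₀, hηm⟩ := hη (ε / 2) (half_pos hε) R hR
  refine ⟨_, half_pos (sub_pos.mpr (lt_rpow_add_rpow_rpow hp hR.le hη₀)), ?_⟩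
  intro z hz hεz x _ y hy hweak hxR
  let w : lp (cesTarget X) (ENNReal.ofReal p) := ⟨cesEmbed z, memℓp_cesEmbed hp hz⟩
  have hyw : ∀ k, cesNorm p (x k - z) = ‖y k - w‖ := fun k =>
    cesNorm_eq_norm hp (by rw [lp.coeFn_sub, hy k, cesEmbed_sub])
  simp only [cesNorm_eq_norm hp (hy _), hyw] at hxR ⊢
  have := lp.leOpialModulus_of_forall_piLp ENNReal.ofReal_ne_top hε hR.le hη₀ hηm w
    (by rwa [← cesNorm_eq_norm hp rfl]) y hweak hxR
  rwa [ENNReal.toReal_ofReal hp.le] at this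

/-- Let `1 < p < ∞`. If the moduli `η_{Y_m}(ε, R)` of the finite sums
`Y_m = [⊕_{n=1}^m (X₁ ⊕₁ ⋯ ⊕₁ Xₙ)]_p` are uniformly positive, i.e. for all `ε, R > 0` there
is `η > 0` working for every `m`, then the `p`-Cesàro sum `[⊕ₙ Xₙ]_{ces_p}` has the uniform
Opial property (weak convergence in the Cesàro sum being expressed via the isometric
embedding `S` into the `ℓ^p`-sum). -/
theorem stmt3 (p : ℝ) (hp : 1 < p) [Fact (1 ≤ ENNReal.ofReal p)]
    (X : ℕ → Type*) [∀ n, NormedAddCommGroup (X n)] [∀ n, NormedSpace ℝ (X n)]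
    [∀ n, CompleteSpace (X n)]
    (hη : ∀ ε > (0 : ℝ), ∀ R > (0 : ℝ), ∃ η > (0 : ℝ), ∀ m : ℕ,
      ∀ y : cesFinTarget (ENNReal.ofReal p) X m, ε ≤ ‖y‖ →
        ∀ u : ℕ → cesFinTarget (ENNReal.ofReal p) X m,
          (∀ φ : cesFinTarget (ENNReal.ofReal p) X m →L[ℝ] ℝ,
            Tendsto (fun k => φ (u k)) atTop (𝓝 0)) →
          limsup (fun k => ‖u k‖) atTop ≤ R →
          η + liminf (fun k => ‖u k‖) atTop ≤ liminf (fun k => ‖u k - y‖) atTop) :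
    ∀ ε > (0 : ℝ), ∀ R > (0 : ℝ), ∃ η > (0 : ℝ),
      ∀ z : ∀ n, X n, MemCes p z → ε ≤ cesNorm p z →
        ∀ x : ℕ → ∀ n, X n, (∀ k, MemCes p (x k)) →
          ∀ y : ℕ → lp (cesTarget X) (ENNReal.ofReal p),
            (∀ k, (y k : ∀ n, cesTarget X n) = cesEmbed (x k)) →
            (∀ φ : lp (cesTarget X) (ENNReal.ofReal p) →L[ℝ] ℝ,
              Tendsto (fun k => φ (y k)) atTop (𝓝 0)) →
            limsup (fun k => cesNorm p (x k)) atTop ≤ R →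
            η + liminf (fun k => cesNorm p (x k)) atTop ≤
              liminf (fun k => cesNorm p (x k - z)) atTop :=
  stmt3_general p X hη
end

section
/- Let 1 < p < ∞ and let (X_n)_{n≥1} be a sequence of real Banach spaces each of which has the Schur property. Then the p-Cesàro sum [⊕_{n∈ℕ} X_n]_{ces_p} has the uniform Opial property: for all ε > 0 and R > 0 there exists η > 0 such that for every x in the Cesàro sum with ‖x‖_{ces_p} ≥ ε and every sequence (x^{(k)}) in the Cesàro sum converging weakly to 0 with limsup_{k→∞} ‖x^{(k)}‖_{ces_p} ≤ R, one has η + liminf_{k→∞} ‖x^{(k)}‖_{ces_p} ≤ liminf_{k→∞} ‖x^{(k)} − x‖_{ces_p}. -/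
/-!
The Cesàro means `a k n` of `‖x k‖` and `b n` of `‖z‖` are nonnegative `ℓ^p` sequences, and the
Cesàro means of `‖x k - z‖` dominate `|a k n - b n|`. Composing with the `i`-th coordinate of the
embedding `S`, each coordinate `x k i` is weakly null in `X i`, hence norm null by the Schur
property, so `a k → 0` pointwise; weak nullity also bounds `‖x k‖` (uniform boundedness).
For such sequences the `ℓ^p` mass splits asymptotically,
`liminf ‖x k - z‖ ^ p ≥ liminf ‖x k‖ ^ p + ‖z‖ ^ p`: along a subsequence on which all norms
converge, cut at a large index `N`; the heads of `a k` vanish, and on the tails Minkowski's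
inequality costs only the small tail of `b`. Since `t ↦ (t ^ p + ε ^ p) ^ (1 / p) - t` is
decreasing and `liminf ‖x k‖ ≤ R`, the modulus `η = (R ^ p + ε ^ p) ^ (1 / p) - R` works.
-/

open Filter
open scoped ENNReal Topology

/-- A real Banach space has the Schur property if every weakly convergent sequence
converges in norm. -/
def SchurProp (Y : Type*) [NormedAddCommGroup Y] [NormedSpace ℝ Y] : Prop :=
  ∀ (u : ℕ → Y) (l : Y),
    (∀ φ : Y →L[ℝ] ℝ, Tendsto (fun k => φ (u k)) atTop (𝓝 (φ l))) →
    Tendsto u atTop (𝓝 l)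

theorem tsum_nat_add_le_tsum_sub_sum {f g : ℕ → ℝ} (hg : Summable g) (hfg : ∀ n, f n ≤ g n)
    (N : ℕ) : ∑' n, g (n + N) ≤ ∑' n, g n - ∑ n ∈ Finset.range N, f n := by
  linarith [hg.sum_add_tsum_nat_add N, Finset.sum_le_sum fun n (_ : n ∈ Finset.range N) => hfg n]

namespace Real

variable {p : ℝ}

theorem Lp_tsum_le_of_le_add {ι : Type*} (hp : 1 ≤ p) {f g h : ι → ℝ} (hf : ∀ i, 0 ≤ f i)
    (hg : ∀ i, 0 ≤ g i) (hh : ∀ i, 0 ≤ h i) (hfgh : ∀ i, f i ≤ g i + h i)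
    (hg_sum : Summable fun i => g i ^ p) (hh_sum : Summable fun i => h i ^ p) :
    (Summable fun i => f i ^ p) ∧
      (∑' i, f i ^ p) ^ (1 / p) ≤ (∑' i, g i ^ p) ^ (1 / p) + (∑' i, h i ^ p) ^ (1 / p) := by
  obtain ⟨hgh_sum, hle⟩ := Lp_add_le_tsum_of_nonneg hp hg hh hg_sum hh_sum
  have hmono : ∀ i, f i ^ p ≤ (g i + h i) ^ p := fun i =>
    rpow_le_rpow (hf i) (hfgh i) (by linarith)
  have hf_sum : Summable fun i => f i ^ p :=
    hgh_sum.of_nonneg_of_le (fun i => rpow_nonneg (hf i) p) hmono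
  refine ⟨hf_sum, le_trans ?_ hle⟩
  exact rpow_le_rpow (tsum_nonneg fun i => rpow_nonneg (hf i) p)
    (hf_sum.tsum_le_tsum hmono hgh_sum) (by positivity)

theorem Lp_tail_le_of_abs_sub_le (hp : 1 ≤ p) {a b c : ℕ → ℝ} (ha : ∀ n, 0 ≤ a n)
    (hb : ∀ n, 0 ≤ b n) (hb_sum : Summable fun n => b n ^ p)
    (hc_sum : Summable fun n => c n ^ p) (habc : ∀ n, |a n - b n| ≤ c n) (N : ℕ) :
    (∑' n, a (n + N) ^ p) ^ (1 / p) ≤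
      (∑' n, c n ^ p - ∑ n ∈ Finset.range N, |a n - b n| ^ p) ^ (1 / p) +
        (∑' n, b (n + N) ^ p) ^ (1 / p) := by
  have hc : ∀ n, 0 ≤ c n := fun n => (abs_nonneg _).trans (habc n)
  have htail := Lp_tsum_le_of_le_add hp (fun n => ha (n + N)) (fun n => hc (n + N))
    (fun n => hb (n + N)) (fun n => by linarith [le_abs_self (a (n + N) - b (n + N)), habc (n + N)])
    ((summable_nat_add_iff N).2 hc_sum) ((summable_nat_add_iff N).2 hb_sum)
  refine htail.2.trans (add_le_add_left ?_ _)
  exact rpow_le_rpow (tsum_nonneg fun n => rpow_nonneg (hc _) p)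
    (tsum_nat_add_le_tsum_sub_sum hc_sum
      (fun n => rpow_le_rpow (abs_nonneg _) (habc n) (by linarith)) N) (by positivity)

theorem add_tsum_rpow_le_of_tendsto (hp : 1 ≤ p) {a c : ℕ → ℕ → ℝ} {b : ℕ → ℝ} {A D : ℝ}
    (ha : ∀ k n, 0 ≤ a k n) (hb : ∀ n, 0 ≤ b n) (ha_sum : ∀ k, Summable fun n => a k n ^ p)
    (hb_sum : Summable fun n => b n ^ p) (hc_sum : ∀ k, Summable fun n => c k n ^ p)
    (habc : ∀ k n, |a k n - b n| ≤ c k n) (ha_lim : ∀ n, Tendsto (fun k => a k n) atTop (𝓝 0))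
    (hA : Tendsto (fun k => ∑' n, a k n ^ p) atTop (𝓝 A))
    (hD : Tendsto (fun k => ∑' n, c k n ^ p) atTop (𝓝 D)) :
    A + ∑' n, b n ^ p ≤ D := by
  have hp0 : 0 < p := by linarith
  have hp' : 0 < 1 / p := by positivity
  set H : ℕ → ℝ := fun N => ∑ n ∈ Finset.range N, b n ^ p
  set T : ℕ → ℝ := fun N => (∑' n, b (n + N) ^ p) ^ (1 / p)
  have hA0 : 0 ≤ A :=
    ge_of_tendsto' hA fun k => tsum_nonneg fun n => rpow_nonneg (ha k n) p
  -- Let `k → ∞` in Minkowski's inequality for the tails from `N` on; then let `N → ∞`.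
  have hN : ∀ N, 0 ≤ D - H N ∧ A ^ (1 / p) ≤ (D - H N) ^ (1 / p) + T N := by
    intro N
    have hhead : Tendsto (fun k => ∑ n ∈ Finset.range N, |a k n - b n| ^ p) atTop
        (𝓝 (H N)) := by
      refine tendsto_finsetSum _ fun n _ => ?_
      simpa [abs_of_nonneg (hb n)] using
        (((ha_lim n).sub_const (b n)).abs.rpow_const (Or.inr hp0.le))
    have hrest : Tendsto (fun k => ∑' n, c k n ^ p - ∑ n ∈ Finset.range N, |a k n - b n| ^ p)
        atTop (𝓝 (D - H N)) := hD.sub hhead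
    have hatail : Tendsto (fun k => ∑' n, a k (n + N) ^ p) atTop (𝓝 A) := by
      have hahead : Tendsto (fun k => ∑ n ∈ Finset.range N, a k n ^ p) atTop (𝓝 0) := by
        simpa [zero_rpow hp0.ne'] using
          tendsto_finsetSum (Finset.range N) fun n _ => (ha_lim n).rpow_const (Or.inr hp0.le)
      simpa [← (ha_sum _).sum_add_tsum_nat_add N] using hA.sub hahead
    have hrest_nonneg : ∀ k, 0 ≤ ∑' n, c k n ^ p - ∑ n ∈ Finset.range N, |a k n - b n| ^ p :=
      fun k => (tsum_nonneg fun n => rpow_nonneg ((abs_nonneg _).trans (habc k (n + N))) p).trans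
        (tsum_nat_add_le_tsum_sub_sum (hc_sum k)
          (fun n => rpow_le_rpow (abs_nonneg _) (habc k n) hp0.le) N)
    exact ⟨ge_of_tendsto' hrest hrest_nonneg, le_of_tendsto_of_tendsto'
      (hatail.rpow_const (Or.inr hp'.le)) ((hrest.rpow_const (Or.inr hp'.le)).add_const (T N))
      fun k => Lp_tail_le_of_abs_sub_le hp (ha k) hb hb_sum (hc_sum k) (habc k) N⟩
  have hH : Tendsto H atTop (𝓝 (∑' n, b n ^ p)) := hb_sum.hasSum.tendsto_sum_nat
  have hT : Tendsto T atTop (𝓝 0) := by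
    have := (tendsto_sum_nat_add fun n => b n ^ p).rpow_const (Or.inr hp'.le)
    rwa [zero_rpow hp'.ne'] at this
  have hDB : 0 ≤ D - ∑' n, b n ^ p :=
    ge_of_tendsto (tendsto_const_nhds.sub hH) (Eventually.of_forall fun N => (hN N).1)
  have hroot : A ^ (1 / p) ≤ (D - ∑' n, b n ^ p) ^ (1 / p) := by
    simpa using le_of_tendsto_of_tendsto' tendsto_const_nhds
      (((tendsto_const_nhds.sub hH).rpow_const (Or.inr hp'.le)).add hT) fun N => (hN N).2
  linarith [(rpow_le_rpow_iff hA0 hDB hp').1 hroot]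

theorem antitoneOn_rpow_add_rpow_one_div_sub (hp : 1 ≤ p) {c : ℝ} (hc : 0 ≤ c) :
    AntitoneOn (fun t => (t ^ p + c) ^ (1 / p) - t) (Set.Ici 0) := by
  intro s hs t ht hst
  have hp0 : 0 < p := by linarith
  have := Lp_add_le_of_nonneg Finset.univ hp (f := ![s, c ^ (1 / p)]) (g := ![t - s, 0])
    (by simp [Fin.forall_fin_two, hs.out, rpow_nonneg hc]) (by simp [Fin.forall_fin_two, hst])
  simp only [Fin.sum_univ_two, Matrix.cons_val_zero, Matrix.cons_val_one, add_sub_cancel,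
    add_zero, zero_rpow hp0.ne', one_div, rpow_inv_rpow hc hp0.ne',
    rpow_rpow_inv (sub_nonneg.2 hst) hp0.ne'] at this ⊢
  linarith

end Real

theorem exists_tendsto_liminf_and_tendsto {u v : ℕ → ℝ} (hu : Bornology.IsBounded (Set.range u))
    (hv : Bornology.IsBounded (Set.range v)) :
    ∃ φ : ℕ → ℕ, Tendsto φ atTop atTop ∧ Tendsto (v ∘ φ) atTop (𝓝 (liminf v atTop)) ∧
      ∃ U, liminf u atTop ≤ U ∧ Tendsto (u ∘ φ) atTop (𝓝 U) := by
  obtain ⟨ψ, hvψ, hψ⟩ := exists_seq_tendsto_liminf (f := atTop) (u := v)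
    hv.bddAbove.isBoundedUnder_of_range.isCoboundedUnder_ge hv.bddBelow.isBoundedUnder_of_range
  obtain ⟨U, -, χ, hχ, huχ⟩ := tendsto_subseq_of_bounded hu fun k => Set.mem_range_self (ψ k)
  refine ⟨ψ ∘ χ, hψ.comp hχ.tendsto_atTop, hvψ.comp hχ.tendsto_atTop, U, ?_, huχ⟩
  rw [← huχ.liminf_eq]
  exact (hψ.comp hχ.tendsto_atTop).liminf_le_liminf_comp
    hu.bddAbove.isBoundedUnder_of_range.isCoboundedUnder_ge hu.bddBelow.isBoundedUnder_of_range


noncomputable def cesAvg {X : ℕ → Type*} [∀ n, NormedAddCommGroup (X n)] (x : ∀ n, X n)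
    (n : ℕ) : ℝ :=
  (∑ i ∈ Finset.range (n + 1), ‖x i‖) / ((n : ℝ) + 1)

section Cesaro

variable {p : ℝ} {X : ℕ → Type*} [∀ n, NormedAddCommGroup (X n)]

theorem cesNorm_eq (x : ∀ n, X n) : cesNorm p x = (∑' n, cesAvg x n ^ p) ^ (1 / p) := rfl

theorem cesAvg_nonneg (x : ∀ n, X n) (n : ℕ) : 0 ≤ cesAvg x n := by
  unfold cesAvg; positivity

theorem cesNorm_nonneg (x : ∀ n, X n) : 0 ≤ cesNorm p x := by
  unfold cesNorm; positivity

theorem cesNorm_rpow (hp : 0 < p) (x : ∀ n, X n) : cesNorm p x ^ p = ∑' n, cesAvg x n ^ p := by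
  rw [cesNorm_eq, one_div, Real.rpow_inv_rpow
    (tsum_nonneg fun n => Real.rpow_nonneg (cesAvg_nonneg x n) p) hp.ne']

theorem abs_cesAvg_sub_cesAvg_le (x z : ∀ n, X n) (n : ℕ) :
    |cesAvg x n - cesAvg z n| ≤ cesAvg (x - z) n := by
  unfold cesAvg
  rw [← sub_div, abs_div, abs_of_pos (by positivity : (0 : ℝ) < n + 1), ← Finset.sum_sub_distrib]
  gcongr
  exact (Finset.abs_sum_le_sum_abs _ _).trans
    (Finset.sum_le_sum fun i _ => abs_norm_sub_norm_le (x i) (z i))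

theorem cesAvg_sub_le (x z : ∀ n, X n) (n : ℕ) : cesAvg (x - z) n ≤ cesAvg x n + cesAvg z n := by
  unfold cesAvg
  rw [← add_div, ← Finset.sum_add_distrib]
  gcongr with i
  exact norm_sub_le (x i) (z i)

theorem MemCes.sub (hp : 1 ≤ p) {x z : ∀ n, X n} (hx : MemCes p x) (hz : MemCes p z) :
    MemCes p (x - z) :=
  (Real.Lp_tsum_le_of_le_add hp (cesAvg_nonneg _) (cesAvg_nonneg _) (cesAvg_nonneg _)
    (cesAvg_sub_le x z) hx hz).1

theorem cesNorm_sub_le (hp : 1 ≤ p) {x z : ∀ n, X n} (hx : MemCes p x) (hz : MemCes p z) :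
    cesNorm p (x - z) ≤ cesNorm p x + cesNorm p z :=
  (Real.Lp_tsum_le_of_le_add hp (cesAvg_nonneg _) (cesAvg_nonneg _) (cesAvg_nonneg _)
    (cesAvg_sub_le x z) hx hz).2

theorem tendsto_cesAvg_zero {x : ℕ → ∀ n, X n} (hx : ∀ i, Tendsto (fun k => x k i) atTop (𝓝 0))
    (n : ℕ) : Tendsto (fun k => cesAvg (x k) n) atTop (𝓝 0) := by
  simpa [cesAvg] using
    (tendsto_finsetSum (Finset.range (n + 1)) fun i _ => (hx i).norm).div_const ((n : ℝ) + 1)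

theorem rpow_liminf_cesNorm_add_le_liminf_cesNorm_sub (hp : 1 ≤ p) {x : ℕ → ∀ n, X n}
    {z : ∀ n, X n} (hx : ∀ k, MemCes p (x k)) (hz : MemCes p z)
    (hx_lim : ∀ i, Tendsto (fun k => x k i) atTop (𝓝 0)) {C : ℝ}
    (hC : ∀ k, cesNorm p (x k) ≤ C) :
    (liminf (fun k => cesNorm p (x k)) atTop ^ p + cesNorm p z ^ p) ^ (1 / p) ≤
      liminf (fun k => cesNorm p (x k - z)) atTop := by
  have hp0 : 0 < p := by linarith
  have hα : Bornology.IsBounded (Set.range fun k => cesNorm p (x k)) :=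
    (Metric.isBounded_Icc 0 C).subset
      (Set.range_subset_iff.2 fun k => ⟨cesNorm_nonneg _, hC k⟩)
  have hβ : Bornology.IsBounded (Set.range fun k => cesNorm p (x k - z)) :=
    (Metric.isBounded_Icc 0 (C + cesNorm p z)).subset (Set.range_subset_iff.2 fun k =>
      ⟨cesNorm_nonneg _, (cesNorm_sub_le hp (hx k) hz).trans (by linarith [hC k])⟩)
  obtain ⟨φ, hφ, hβφ, U, hLU, hαφ⟩ := exists_tendsto_liminf_and_tendsto hα hβ
  set L := liminf (fun k => cesNorm p (x k)) atTop
  set Λ := liminf (fun k => cesNorm p (x k - z)) atTop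
  have hL0 : 0 ≤ L := le_liminf_of_le hα.bddAbove.isBoundedUnder_of_range.isCoboundedUnder_ge
    (Eventually.of_forall fun k => cesNorm_nonneg _)
  have hΛ0 : 0 ≤ Λ := ge_of_tendsto' hβφ fun k => cesNorm_nonneg _
  have key : U ^ p + cesNorm p z ^ p ≤ Λ ^ p := by
    rw [cesNorm_rpow hp0]
    refine Real.add_tsum_rpow_le_of_tendsto hp (c := fun k => cesAvg (x (φ k) - z))
      (fun k => cesAvg_nonneg (x (φ k)))
      (cesAvg_nonneg z) (fun k => hx (φ k)) hz (fun k => (hx (φ k)).sub hp hz)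
      (fun k => abs_cesAvg_sub_cesAvg_le (x (φ k)) z)
      (fun n => (tendsto_cesAvg_zero hx_lim n).comp hφ) ?_ ?_
    · simpa only [Function.comp_def, cesNorm_rpow hp0] using hαφ.rpow_const (Or.inr hp0.le)
    · simpa only [Function.comp_def, cesNorm_rpow hp0] using hβφ.rpow_const (Or.inr hp0.le)
  calc (L ^ p + cesNorm p z ^ p) ^ (1 / p) ≤ (Λ ^ p) ^ (1 / p) := by
        have hLU' := Real.rpow_le_rpow hL0 hLU hp0.le
        exact Real.rpow_le_rpow
          (add_nonneg (Real.rpow_nonneg hL0 p) (Real.rpow_nonneg (cesNorm_nonneg z) p))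
          (by linarith) (by positivity)
    _ = Λ := by rw [one_div, Real.rpow_rpow_inv hΛ0 hp0.ne']

end Cesaro

theorem exists_norm_le_of_weakly_null {E : Type*} [NormedAddCommGroup E] [NormedSpace ℝ E]
    {y : ℕ → E} (hy : ∀ φ : E →L[ℝ] ℝ, Tendsto (fun k => φ (y k)) atTop (𝓝 0)) :
    ∃ C, ∀ k, ‖y k‖ ≤ C := by
  obtain ⟨C, hC⟩ := banach_steinhaus (g := fun k => NormedSpace.inclusionInDoubleDual ℝ E (y k))
    fun φ => by
      obtain ⟨M, hM⟩ := Metric.isBounded_iff_subset_closedBall (0 : ℝ) |>.1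
        (Metric.isBounded_range_of_tendsto _ (hy φ))
      exact ⟨M, fun k => by simpa using hM (Set.mem_range_self k)⟩
  exact ⟨C, fun k => (NormedSpace.inclusionInDoubleDualLi ℝ (E := E)).norm_map (y k) ▸ hC k⟩

theorem SchurProp.tendsto_zero_of_weakly_null {Y E : Type*} [NormedAddCommGroup Y]
    [NormedSpace ℝ Y] [NormedAddCommGroup E] [NormedSpace ℝ E] (hY : SchurProp Y)
    (T : E →L[ℝ] Y) {y : ℕ → E} (hy : ∀ φ : E →L[ℝ] ℝ, Tendsto (fun k => φ (y k)) atTop (𝓝 0)) :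
    Tendsto (fun k => T (y k)) atTop (𝓝 0) :=
  hY _ 0 fun φ => by simpa using hy (φ.comp T)

section Embedding

variable {p : ℝ} {X : ℕ → Type*} [∀ n, NormedAddCommGroup (X n)] [∀ n, NormedSpace ℝ (X n)]

theorem norm_cesEmbed_apply (x : ∀ n, X n) (n : ℕ) : ‖cesEmbed x n‖ = cesAvg x n := by
  rw [cesEmbed, norm_smul, PiLp.norm_eq_of_L1, Real.norm_of_nonneg (by positivity), cesAvg,
    inv_mul_eq_div]
  congr 1
  exact Fin.sum_univ_eq_sum_range (fun i => ‖x i‖) (n + 1)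

theorem norm_eq_cesNorm_of_coe_eq_cesEmbed [Fact (1 ≤ ENNReal.ofReal p)] (hp : 0 < p)
    {x : ∀ n, X n} {y : lp (cesTarget X) (ENNReal.ofReal p)}
    (hy : (y : ∀ n, cesTarget X n) = cesEmbed x) : ‖y‖ = cesNorm p x := by
  have hp' : (ENNReal.ofReal p).toReal = p := ENNReal.toReal_ofReal hp.le
  rw [lp.norm_eq_tsum_rpow (by rwa [hp']), hp', hy]
  simp only [norm_cesEmbed_apply, cesNorm_eq]

theorem cesEmbed_apply_last (x : ∀ n, X n) (i : ℕ) :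
    ((i : ℝ) + 1) • cesEmbed x i (Fin.last i) = x i := by
  have : ((i : ℝ) + 1) ≠ 0 := by positivity
  simp [cesEmbed, smul_smul, this]

theorem tendsto_apply_zero_of_weakly_null_cesEmbed [Fact (1 ≤ ENNReal.ofReal p)]
    (hSchur : ∀ n, SchurProp (X n)) {x : ℕ → ∀ n, X n}
    {y : ℕ → lp (cesTarget X) (ENNReal.ofReal p)}
    (hy : ∀ k, (y k : ∀ n, cesTarget X n) = cesEmbed (x k))
    (hw : ∀ φ : lp (cesTarget X) (ENNReal.ofReal p) →L[ℝ] ℝ,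
      Tendsto (fun k => φ (y k)) atTop (𝓝 0)) (i : ℕ) :
    Tendsto (fun k => x k i) atTop (𝓝 0) := by
  let T : lp (cesTarget X) (ENNReal.ofReal p) →L[ℝ] X i := ((i : ℝ) + 1) •
    (PiLp.proj 1 (fun j : Fin (i + 1) => X j) (Fin.last i)).comp (lp.evalCLM ℝ _ _ i)
  have hT : ∀ k, T (y k) = x k i := fun k => by
    simp [T, lp.evalCLM, hy k, cesEmbed_apply_last]
  simpa only [hT] using (hSchur i).tendsto_zero_of_weakly_null T hw

end Embedding

theorem stmt4_general (p : ℝ) (hp : 1 < p) [Fact (1 ≤ ENNReal.ofReal p)]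
    (X : ℕ → Type*) [∀ n, NormedAddCommGroup (X n)] [∀ n, NormedSpace ℝ (X n)]
    (hSchur : ∀ n, SchurProp (X n)) :
    ∀ ε > (0 : ℝ), ∀ R > (0 : ℝ), ∃ η > (0 : ℝ),
      ∀ z : ∀ n, X n, MemCes p z → ε ≤ cesNorm p z →
        ∀ x : ℕ → ∀ n, X n, (∀ k, MemCes p (x k)) →
          ∀ y : ℕ → lp (cesTarget X) (ENNReal.ofReal p),
            (∀ k, (y k : ∀ n, cesTarget X n) = cesEmbed (x k)) →
            (∀ φ : lp (cesTarget X) (ENNReal.ofReal p) →L[ℝ] ℝ,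
              Tendsto (fun k => φ (y k)) atTop (𝓝 0)) →
            limsup (fun k => cesNorm p (x k)) atTop ≤ R →
            η + liminf (fun k => cesNorm p (x k)) atTop ≤
              liminf (fun k => cesNorm p (x k - z)) atTop := by
  intro ε hε R hR
  have hp0 : 0 < p := by linarith
  refine ⟨(R ^ p + ε ^ p) ^ (1 / p) - R, ?_, ?_⟩
  · have := Real.rpow_lt_rpow (Real.rpow_nonneg hR.le p)
      (lt_add_of_pos_right (R ^ p) (Real.rpow_pos_of_pos hε p)) (by positivity : 0 < 1 / p)
    rw [one_div, Real.rpow_rpow_inv hR.le hp0.ne', ← one_div] at this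
    linarith
  intro z hz hεz x hx y hy hw hlimsup
  obtain ⟨C, hC⟩ := exists_norm_le_of_weakly_null hw
  have hα : ∀ k, cesNorm p (x k) ≤ C := fun k =>
    norm_eq_cesNorm_of_coe_eq_cesEmbed hp0 (hy k) ▸ hC k
  have hopial := rpow_liminf_cesNorm_add_le_liminf_cesNorm_sub hp.le hx hz
    (tendsto_apply_zero_of_weakly_null_cesEmbed hSchur hy hw) hα
  set L := liminf (fun k => cesNorm p (x k)) atTop
  have hbdd : IsBoundedUnder (· ≤ ·) atTop fun k => cesNorm p (x k) := isBoundedUnder_of ⟨C, hα⟩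
  have hbdd' : IsBoundedUnder (· ≥ ·) atTop fun k => cesNorm p (x k) :=
    isBoundedUnder_of ⟨0, fun k => cesNorm_nonneg _⟩
  have hL0 : 0 ≤ L := le_liminf_of_le hbdd.isCoboundedUnder_ge
    (Eventually.of_forall fun k => cesNorm_nonneg _)
  have hLR : L ≤ R := (liminf_le_limsup hbdd hbdd').trans hlimsup
  calc (R ^ p + ε ^ p) ^ (1 / p) - R + L ≤ (L ^ p + ε ^ p) ^ (1 / p) := by
        linarith [Real.antitoneOn_rpow_add_rpow_one_div_sub hp.le (Real.rpow_nonneg hε.le p)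
          (Set.mem_Ici.2 hL0) (Set.mem_Ici.2 (hL0.trans hLR)) hLR]
    _ ≤ (L ^ p + cesNorm p z ^ p) ^ (1 / p) := by
        gcongr
    _ ≤ _ := hopial

/-- If `1 < p < ∞` and every `Xₙ` has the Schur property, then the
`p`-Cesàro sum `[⊕ₙ Xₙ]_{ces_p}` has the uniform Opial property (weak convergence in the
Cesàro sum being expressed via the isometric embedding `S` into the `ℓ^p`-sum
`[⊕ₙ (X₁ ⊕₁ ⋯ ⊕₁ Xₙ)]_p`). -/
theorem stmt4 (p : ℝ) (hp : 1 < p) [Fact (1 ≤ ENNReal.ofReal p)]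
    (X : ℕ → Type*) [∀ n, NormedAddCommGroup (X n)] [∀ n, NormedSpace ℝ (X n)]
    [∀ n, CompleteSpace (X n)]
    (hSchur : ∀ n, SchurProp (X n)) :
    ∀ ε > (0 : ℝ), ∀ R > (0 : ℝ), ∃ η > (0 : ℝ),
      ∀ z : ∀ n, X n, MemCes p z → ε ≤ cesNorm p z →
        ∀ x : ℕ → ∀ n, X n, (∀ k, MemCes p (x k)) →
          ∀ y : ℕ → lp (cesTarget X) (ENNReal.ofReal p),
            (∀ k, (y k : ∀ n, cesTarget X n) = cesEmbed (x k)) →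
            (∀ φ : lp (cesTarget X) (ENNReal.ofReal p) →L[ℝ] ℝ,
              Tendsto (fun k => φ (y k)) atTop (𝓝 0)) →
            limsup (fun k => cesNorm p (x k)) atTop ≤ R →
            η + liminf (fun k => cesNorm p (x k)) atTop ≤
              liminf (fun k => cesNorm p (x k - z)) atTop :=
  stmt4_general p hp X hSchur
end
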